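/- arXiv:1504.06806 — 3 statements merged into one kernel-verified Lean document; each statement's English description precedes it below -/
import Mathlib

section
/- Let φ : X → Y be a surjective strongly étale G-morphism of affine G-schemes of finite type over k, where G is reductive. Then for any G-stable closed subscheme Z ⊆ Y whose categorical quotient Z//G is a single reduced point, there exists a G-stable closed subscheme W ⊆ X such that φ restricts to an isomorphism W → Z. -/
open scoped TensorProduct
set_option maxHeartbeats 1000000

def LinearlyReductive (k G : Type) [Field k] [Group G] : Prop :=
  ∀ (V : Type) (_ : AddCommGroup V) (_ : Module k V) (_ : FiniteDimensional k V)
    (ρ : Representation k G V), IsSemisimpleModule (MonoidAlgebra k G) ρ.asModule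

/-!
A closed point of `X` above `Z` (it exists since `φ` is surjective) is a `k`-point
`ε : A → k` by the Nullstellensatz, and it lies over the unique point of `Z//G`: `ε ∘ ιA` and
`B^G → (B ⧸ J)^G = k` agree on `B^G`. As `A = A^G ⊗_{B^G} B`, the pair `(ε ∘ ιA, B → B ⧸ J)`
glues to a retraction `Φ : A → B ⧸ J` of `φ` modulo `J`. Its kernel `I` is `G`-stable because
`G` fixes `A^G` and acts compatibly on `B ⧸ J`, and `B ⧸ J → A ⧸ I` is inverted by the map
induced by `Φ`.
-/

open Function

theorem Ideal.exists_isMaximal_le_comap_of_surjective_comap {R S : Type*} [CommRing R]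
    [CommRing S] (f : R →+* S) (hf : Surjective (PrimeSpectrum.comap f)) {J : Ideal R}
    (hJ : J ≠ ⊤) : ∃ M : Ideal S, M.IsMaximal ∧ J ≤ M.comap f := by
  obtain ⟨P, hP, hJP⟩ := Ideal.exists_le_maximal J hJ
  obtain ⟨Q, hQ⟩ := hf ⟨P, hP.isPrime⟩
  obtain ⟨M, hM, hQM⟩ := Ideal.exists_le_maximal Q.asIdeal Q.isPrime.ne_top
  refine ⟨M, hM, hJP.trans ?_⟩
  calc P = Q.asIdeal.comap f := (congrArg PrimeSpectrum.asIdeal hQ).symm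
    _ ≤ M.comap f := Ideal.comap_mono hQM

theorem Ideal.exists_algHom_ker_eq_of_isMaximal {k A : Type*} [Field k] [IsAlgClosed k]
    [CommRing A] [Algebra k A] [Algebra.FiniteType k A] (M : Ideal A) [M.IsMaximal] :
    ∃ ε : A →ₐ[k] k, RingHom.ker ε = M := by
  let := Ideal.Quotient.field M
  have : Module.Finite k (A ⧸ M) := finite_of_finite_type_of_isJacobsonRing k (A ⧸ M)
  let e := AlgEquiv.ofBijective (Algebra.ofId k (A ⧸ M))
    IsAlgClosed.algebraMap_bijective_of_isIntegral
  refine ⟨(e.symm : A ⧸ M →ₐ[k] k).comp (Ideal.Quotient.mkₐ k M), ?_⟩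
  ext a
  simp [RingHom.mem_ker, Ideal.Quotient.eq_zero_iff_mem]

theorem exists_algHom_le_ker_comp {k B A : Type*} [Field k] [IsAlgClosed k] [CommRing B]
    [CommRing A] [Algebra k B] [Algebra k A] [Algebra.FiniteType k A] (φ : B →ₐ[k] A)
    (hφ : Surjective (PrimeSpectrum.comap (φ : B →+* A))) {J : Ideal B} (hJ : J ≠ ⊤) :
    ∃ ε : A →ₐ[k] k, J ≤ RingHom.ker (ε.comp φ) := by
  obtain ⟨M, hM, hJM⟩ := Ideal.exists_isMaximal_le_comap_of_surjective_comap _ hφ hJ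
  obtain ⟨ε, hε⟩ := M.exists_algHom_ker_eq_of_isMaximal (k := k)
  refine ⟨ε, hJM.trans_eq ?_⟩
  rw [← hε]
  rfl

theorem Ideal.Quotient.algebraMap_eq_mk_of_sub_mem {k B : Type*} [CommRing k] [CommRing B]
    [Algebra k B] {J : Ideal B} (χ : B →ₐ[k] k) (hJ : J ≤ RingHom.ker χ) {b : B} {x : k}
    (hb : b - algebraMap k B x ∈ J) : algebraMap k (B ⧸ J) (χ b) = Ideal.Quotient.mk J b := by
  have hχ : χ b = x := by
    simpa [sub_eq_zero] using hJ hb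
  rw [hχ, ← Ideal.Quotient.mk_algebraMap, Ideal.Quotient.eq]
  exact neg_mem_iff.1 (by simpa using hb)

section CartesianSquare

open Algebra.TensorProduct

variable {R S T A : Type*} [CommRing R] [CommRing S] [CommRing T] [CommRing A]
  [Algebra R S] [Algebra R T] [Algebra R A] (i : S →ₐ[R] A) (f : T →ₐ[R] A)

theorem exists_algHom_comp_eq_of_bijective_lift
    (h : Bijective (lift i f fun _ _ => Commute.all _ _)) {C : Type*} [CommRing C] [Algebra R C]
    (s : S →ₐ[R] C) (t : T →ₐ[R] C) :
    ∃ Φ : A →ₐ[R] C, (∀ x, Φ (i x) = s x) ∧ ∀ y, Φ (f y) = t y := by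
  let e := AlgEquiv.ofBijective _ h
  refine ⟨(lift s t fun _ _ => Commute.all _ _).comp (e.symm : A →ₐ[R] S ⊗[R] T),
    fun x => ?_, fun y => ?_⟩
  · have : e (x ⊗ₜ 1) = i x := by simp [e]
    simp [← this]
  · have : e (1 ⊗ₜ y) = f y := by simp [e]
    simp [← this]

theorem ringHom_ext_of_surjective_lift (h : Surjective (lift i f fun _ _ => Commute.all _ _))
    {C : Type*} [Semiring C] {u v : A →+* C} (hi : ∀ x, u (i x) = v (i x))
    (hf : ∀ y, u (f y) = v (f y)) : u = v := by
  ext a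
  obtain ⟨t, rfl⟩ := h a
  induction t using TensorProduct.induction_on with
  | zero => simp
  | tmul x y => simp [hi, hf]
  | add t t' ht ht' => simp [ht, ht']

end CartesianSquare

theorem Ideal.exists_bijective_quotientMap_ker {B A : Type*} [CommRing B] [CommRing A]
    {J : Ideal B} (φ : B →+* A) {Φ : A →+* B ⧸ J} (hΦ : ∀ b, Φ (φ b) = Ideal.Quotient.mk J b) :
    ∃ hle : J ≤ (RingHom.ker Φ).comap φ, Bijective (Ideal.quotientMap (RingHom.ker Φ) φ hle) := by
  have hle : J ≤ (RingHom.ker Φ).comap φ := fun b hb => by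
    simpa [hΦ] using Ideal.Quotient.eq_zero_iff_mem.2 hb
  have hinv : LeftInverse (RingHom.kerLift Φ) (Ideal.quotientMap _ φ hle) := by
    intro y
    obtain ⟨b, rfl⟩ := Ideal.Quotient.mk_surjective y
    simp [hΦ]
  exact ⟨hle, hinv.injective,
    (hinv.rightInverse_of_injective (RingHom.kerLift_injective Φ)).surjective⟩

/-- `X = Spec A`, `Y = Spec B`, `Z = Spec (B ⧸ J)`, `W = Spec (A ⧸ I)`; `ιA`, `ιB` present
`CA`, `CB` as the invariant rings `O(X//G)`, `O(Y//G)`, `ψ` is `O(φ//G)`, and `hJinv` says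
`(B ⧸ J)^G = k`. -/
theorem strongly_etale_surjective_section_over_closed_orbit
    (k G A B CA CB : Type) [Field k] [IsAlgClosed k] [Group G]
    [CommRing A] [Algebra k A] [CommRing B] [Algebra k B]
    [CommRing CA] [Algebra k CA] [CommRing CB] [Algebra k CB]
    (hfgA : Algebra.FiniteType k A)
    (ρA : G →* (A ≃ₐ[k] A)) (ρB : G →* (B ≃ₐ[k] B))
    (φ : B →ₐ[k] A)
    (hφequiv : ∀ (g : G) (b : B), φ (ρB g b) = ρA g (φ b))
    (ιA : CA →ₐ[k] A) (ιB : CB →ₐ[k] B)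
    (hrangeA : Set.range ιA = {a : A | ∀ g : G, ρA g a = a})
    (hrangeB : Set.range ιB = {b : B | ∀ g : G, ρB g b = b})
    (ψ : CB →ₐ[k] CA)
    (hψ : ∀ c : CB, ιA (ψ c) = φ (ιB c))
    -- algebra structures over the invariant ring `CB` of `Y`, compatible with the above
    [Algebra CB CA] [Algebra CB B] [Algebra CB A]
    (hCACB : (algebraMap CB CA : CB → CA) = ψ)
    (hBCB : (algebraMap CB B : CB → B) = ιB)
    (hACB : (algebraMap CB A : CB → A) = φ ∘ ιB)
    -- the square is cartesian: `A^G ⊗_{B^G} B ≅ A`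
    (hcart : Function.Bijective
      (Algebra.TensorProduct.lift
        ({ toRingHom := ιA.toRingHom,
           commutes' := fun c => by
             simp only [AlgHom.toRingHom_eq_coe, RingHom.coe_coe]
             rw [show (algebraMap CB CA) c = ψ c from congrFun hCACB c,
               show (algebraMap CB A) c = φ (ιB c) from congrFun hACB c]
             exact hψ c } : CA →ₐ[CB] A)
        ({ toRingHom := φ.toRingHom,
           commutes' := fun c => by
             simp only [AlgHom.toRingHom_eq_coe, RingHom.coe_coe]
             rw [show (algebraMap CB B) c = ιB c from congrFun hBCB c,
               show (algebraMap CB A) c = φ (ιB c) from congrFun hACB c]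
             rfl } : B →ₐ[CB] A)
        (fun _ _ => Commute.all _ _)))
    -- `φ` is surjective (as a morphism of schemes)
    (hsurj : Function.Surjective (PrimeSpectrum.comap (φ : B →+* A)))
    (J : Ideal B) (hJtop : J ≠ ⊤)
    (hJstab : ∀ g : G, ∀ b ∈ J, ρB g b ∈ J)
    (hJinv : ∀ b : B, (∀ g : G, ρB g b - b ∈ J) → ∃ c : k, b - algebraMap k B c ∈ J) :
    ∃ I : Ideal A, (∀ g : G, ∀ a ∈ I, ρA g a ∈ I) ∧
      ∃ hle : J ≤ I.comap (φ : B →+* A),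
        Function.Bijective (Ideal.quotientMap I (φ : B →+* A) hle) := by
  have := hfgA
  obtain ⟨ε, hJε⟩ := exists_algHom_le_ker_comp φ hsurj hJtop
  have hconst (c : CB) : algebraMap k (B ⧸ J) (ε (φ (ιB c))) = Ideal.Quotient.mk J (ιB c) := by
    have hfix : ιB c ∈ {b : B | ∀ g : G, ρB g b = b} := hrangeB ▸ Set.mem_range_self c
    obtain ⟨x, hx⟩ := hJinv (ιB c) fun g => by simp [hfix g]
    exact Ideal.Quotient.algebraMap_eq_mk_of_sub_mem (ε.comp φ) hJε hx
  let s : CA →ₐ[CB] B ⧸ J :=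
    { toRingHom := (algebraMap k (B ⧸ J)).comp (ε.comp ιA : CA →+* k)
      commutes' := fun c => by
        simpa [congrFun hCACB c, hψ, ← Ideal.Quotient.mk_algebraMap, congrFun hBCB c]
          using hconst c }
  obtain ⟨Φ, hΦι, hΦφ⟩ : ∃ Φ : A →ₐ[CB] B ⧸ J,
      (∀ c, Φ (ιA c) = s c) ∧ ∀ b, Φ (φ b) = Ideal.Quotient.mk J b :=
    exists_algHom_comp_eq_of_bijective_lift _ _ hcart s (Ideal.Quotient.mkₐ CB J)
  refine ⟨RingHom.ker Φ, fun g a ha => ?_, Ideal.exists_bijective_quotientMap_ker _ hΦφ⟩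
  have hJg : J ≤ J.comap (ρB g : B →+* B) := hJstab g
  let q := Ideal.quotientMap J (ρB g : B →+* B) hJg
  have hcomm : (Φ : A →+* B ⧸ J).comp (ρA g : A →+* A) = q.comp Φ := by
    refine ringHom_ext_of_surjective_lift _ _ hcart.2 (fun c => ?_) (fun b => ?_)
    · have hfix : ιA c ∈ {a : A | ∀ g : G, ρA g a = a} := hrangeA ▸ Set.mem_range_self c
      simp [hfix g, hΦι, s, q, ← Ideal.Quotient.mk_algebraMap]
    · simp [← hφequiv, hΦφ, q]
  exact RingHom.mem_ker.2 ((RingHom.congr_fun hcomm a).trans (by simp [RingHom.mem_ker.1 ha]))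
end

section
/- Let A be a Noetherian local ring with a rational action of a linearly reductive group H fixing the maximal ideal, such that H acts trivially on m/m². If H acts trivially on A/m^n for some n, it acts trivially on A/m^{n+1}; consequently, if H acts trivially on m/m² and A is m-adically separated with the H-action compatible with the filtration, then H acts trivially on A. -/
open IsLocalRing

section Unipotent

variable {k H U : Type} [Field k] [Group H] [AddCommGroup U] [Module k U]

def unipotentRep (φ : H →* Multiplicative U) : Representation k H (k × U) where
  toFun g := LinearMap.id + LinearMap.inr k k U ∘ₗ (LinearMap.fst k k U).smulRight (φ g).toAdd
  map_one' := by ext <;> simp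
  map_mul' g₁ g₂ := by ext <;> simp [add_comm]

@[simp]
lemma unipotentRep_apply (φ : H →* Multiplicative U) (g : H) (v : k × U) :
    unipotentRep φ g v = (v.1, v.2 + v.1 • (φ g).toAdd) :=
  Prod.ext (add_zero _) rfl

theorem LinearlyReductive.monoidHom_eq_one (hred : LinearlyReductive k H) [FiniteDimensional k U]
    (φ : H →* Multiplicative U) : φ = 1 := by
  have : (unipotentRep (k := k) φ).IsSemisimpleRepresentation :=
    (Representation.isSemisimpleRepresentation_iff_isSemisimpleModule_asModule _).2
      (hred _ _ _ inferInstance _)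
  let W : Subrepresentation (unipotentRep (k := k) φ) :=
    ⟨LinearMap.ker (LinearMap.fst k k U), fun g v hv => by simpa using hv⟩
  obtain ⟨W', hW⟩ := exists_isCompl W
  have hv : ((1 : k), (0 : U)) ∈ ((W ⊔ W' : Subrepresentation _) : Set (k × U)) := by
    rw [hW.sup_eq_top]; trivial
  obtain ⟨w, hw, u, hu, hwu⟩ := Set.mem_add.1 (by simpa only [Subrepresentation.coe_sup] using hv)
  have hu₁ : u.1 = 1 := by simpa [show w.1 = 0 from hw] using congrArg Prod.fst hwu
  ext g
  have hmem : unipotentRep φ g u - u ∈ W ⊓ W' :=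
    ⟨by simp [W], sub_mem (W'.apply_mem_toSubmodule g hu) hu⟩
  rw [hW.inf_eq_bot] at hmem
  have := congrArg Prod.snd ((Submodule.mem_bot k).1 hmem)
  simpa [hu₁] using this

end Unipotent

theorem Module.Finite.of_forall_exists_smul_eq {k R M : Type*} [CommSemiring k] [Semiring R]
    [Algebra k R] [AddCommMonoid M] [Module R M] [Module k M] [IsScalarTower k R M]
    [Module.Finite R M] (h : ∀ r : R, ∃ c : k, ∀ m : M, r • m = c • m) : Module.Finite k M := by
  obtain ⟨S, hS⟩ := Module.Finite.fg_top (R := R) (M := M)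
  refine ⟨⟨S, eq_top_iff.2 ?_⟩⟩
  rintro m -
  induction (hS ▸ Submodule.mem_top : m ∈ Submodule.span R (S : Set M))
    using Submodule.span_induction with
  | mem x hx => exact Submodule.subset_span hx
  | zero => exact zero_mem _
  | add x y _ _ hx hy => exact add_mem hx hy
  | smul r x _ hx =>
    obtain ⟨c, hc⟩ := h r
    exact hc x ▸ Submodule.smul_mem _ c hx

namespace Ideal

variable {A : Type*} [CommRing A] (I : Ideal A)

abbrev GradedPiece (n : ℕ) : Type _ :=
  ↥(I ^ n) ⧸ Submodule.comap (Submodule.subtype (I ^ n)) (I ^ (n + 1))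

variable {I}

theorem exists_sub_algebraMap_mem {k : Type*} [CommSemiring k] [Algebra k A]
    (hI : Function.Surjective (algebraMap k (A ⧸ I))) (a : A) :
    ∃ c : k, a - algebraMap k A c ∈ I := by
  obtain ⟨c, hc⟩ := hI (Ideal.Quotient.mk I a)
  refine ⟨c, ?_⟩
  rw [← Ideal.Quotient.eq_zero_iff_mem, map_sub, Ideal.Quotient.mk_algebraMap, hc, sub_self]

theorem finite_gradedPiece {k : Type*} [CommSemiring k] [Algebra k A] [IsNoetherianRing A]
    (hI : Function.Surjective (algebraMap k (A ⧸ I))) (n : ℕ) :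
    Module.Finite k (I.GradedPiece n) := by
  refine Module.Finite.of_forall_exists_smul_eq (R := A) fun a => ?_
  obtain ⟨c, hc⟩ := exists_sub_algebraMap_mem hI a
  refine ⟨c, fun m => ?_⟩
  induction m using Submodule.Quotient.induction_on with
  | H x =>
    rw [← algebraMap_smul A c, ← sub_eq_zero, ← sub_smul, ← Submodule.Quotient.mk_smul,
      Submodule.Quotient.mk_eq_zero]
    exact pow_succ' I n ▸ mul_mem_mul hc x.2

theorem sub_mem_of_surjective_algebraMap {k F : Type*} [CommSemiring k] [Algebra k A]
    [FunLike F A A] [AlgHomClass F k A A] (hI : Function.Surjective (algebraMap k (A ⧸ I)))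
    (σ : F) (hσ : ∀ x ∈ I, σ x - x ∈ I) (a : A) : σ a - a ∈ I := by
  obtain ⟨c, hc⟩ := exists_sub_algebraMap_mem hI a
  have := hσ _ hc
  rwa [map_sub, AlgHomClass.commutes, sub_sub_sub_cancel_right] at this

theorem sub_mem_pow_succ_of_mem_pow {F : Type*} [FunLike F A A] [RingHomClass F A A] (σ : F)
    (h₀ : ∀ x, σ x - x ∈ I) (h₁ : ∀ x ∈ I, σ x - x ∈ I ^ 2) {n : ℕ} {x : A} (hx : x ∈ I ^ n) :
    σ x - x ∈ I ^ (n + 1) := by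
  induction n generalizing x with
  | zero => simpa using h₀ x
  | succ n ih =>
    rw [pow_succ] at hx
    induction hx using Submodule.mul_induction_on' with
    | mem_mul_mem y hy z hz =>
      have hσz : σ z ∈ I := by simpa using add_mem (h₀ z) hz
      have key : σ (y * z) - y * z = (σ y - y) * σ z + y * (σ z - z) := by rw [map_mul]; ring
      rw [key]
      exact add_mem (pow_succ I (n + 1) ▸ mul_mem_mul (ih hy) hσz)
        (pow_add I n 2 ▸ mul_mem_mul hy (h₁ z hz))
    | add y _ z _ hy hz => simpa [add_sub_add_comm] using add_mem hy hz

end Ideal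

section Cocycle

variable {k H A : Type*} [CommSemiring k] [Group H] [CommRing A] [Algebra k A]
  (ρ : H →* (A ≃ₐ[k] A)) {I : Ideal A} {n : ℕ} {a : A}

def gradedCocycle (ha : ∀ g, ρ g a - a ∈ I ^ n) (hρ : ∀ g, ∀ x ∈ I ^ n, ρ g x - x ∈ I ^ (n + 1)) :
    H →* Multiplicative (I.GradedPiece n) :=
  MonoidHom.mk' (fun g => .ofAdd (Submodule.Quotient.mk ⟨ρ g a - a, ha g⟩)) fun g₁ g₂ => by
    rw [← ofAdd_add, ← Submodule.Quotient.mk_add]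
    refine congrArg _ ((Submodule.Quotient.eq _).2 ?_)
    change ρ (g₁ * g₂) a - a - (ρ g₁ a - a + (ρ g₂ a - a)) ∈ I ^ (n + 1)
    convert hρ g₁ _ (ha g₂) using 1
    rw [map_mul, AlgEquiv.mul_apply, map_sub]
    ring

theorem gradedCocycle_eq_one_iff (ha : ∀ g, ρ g a - a ∈ I ^ n)
    (hρ : ∀ g, ∀ x ∈ I ^ n, ρ g x - x ∈ I ^ (n + 1)) (g : H) :
    gradedCocycle ρ ha hρ g = 1 ↔ ρ g a - a ∈ I ^ (n + 1) :=
  ofAdd_eq_one.trans (Submodule.Quotient.mk_eq_zero _)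

end Cocycle

theorem trivial_action_on_quotients_general
    (k H A : Type) [Field k] [Group H]
    [CommRing A] [Algebra k A] [IsLocalRing A] [IsNoetherianRing A]
    (hres : Function.Bijective (algebraMap k (A ⧸ maximalIdeal A)))
    (hred : LinearlyReductive k H)
    (ρ : H →* (A ≃ₐ[k] A))
    (htriv : ∀ h : H, ∀ x ∈ maximalIdeal A, ρ h x - x ∈ maximalIdeal A ^ 2) :
    (∀ n : ℕ, (∀ h : H, ∀ a : A, ρ h a - a ∈ maximalIdeal A ^ n) →
        ∀ h : H, ∀ a : A, ρ h a - a ∈ maximalIdeal A ^ (n + 1)) ∧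
      ((⨅ n : ℕ, maximalIdeal A ^ n) = ⊥ → ∀ h : H, ∀ a : A, ρ h a = a) := by
  have hgraded (h : H) (n : ℕ) :
      ∀ x ∈ maximalIdeal A ^ n, ρ h x - x ∈ maximalIdeal A ^ (n + 1) :=
    fun _ => Ideal.sub_mem_pow_succ_of_mem_pow (ρ h)
      (Ideal.sub_mem_of_surjective_algebraMap hres.2 (ρ h)
        fun x hx => Ideal.pow_le_self two_ne_zero (htriv h x hx))
      (htriv h)
  have step (n : ℕ) (hn : ∀ h : H, ∀ a : A, ρ h a - a ∈ maximalIdeal A ^ n) (h : H) (a : A) :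
      ρ h a - a ∈ maximalIdeal A ^ (n + 1) := by
    have := Ideal.finite_gradedPiece hres.2 n
    exact (gradedCocycle_eq_one_iff ρ (hn · a) (hgraded · n) h).1
      (DFunLike.congr_fun (hred.monoidHom_eq_one _) h)
  refine ⟨step, fun hsep h a => ?_⟩
  have hall (n : ℕ) : ∀ h : H, ∀ a : A, ρ h a - a ∈ maximalIdeal A ^ n := by
    induction n with
    | zero => simp
    | succ n ih => exact step n ih
  rw [← sub_eq_zero, ← Submodule.mem_bot A, ← hsep, Submodule.mem_iInf]
  exact fun n => hall n h a

/-- Let a linearly reductive group `H` act on a Noetherian local `k`-algebra `(A, m)` with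
residue field `k`, preserving `m` and acting trivially on `m/m²`.  Then:
(1) if `H` acts trivially on `A/mⁿ` it acts trivially on `A/m^(n+1)`; and
(2) if `A` is `m`-adically separated then `H` acts trivially on `A`. -/
theorem trivial_action_on_quotients
    (k H A : Type) [Field k] [IsAlgClosed k] [CharZero k] [Group H]
    [CommRing A] [Algebra k A] [IsLocalRing A] [IsNoetherianRing A]
    (hres : Function.Bijective (algebraMap k (A ⧸ maximalIdeal A)))
    (hred : LinearlyReductive k H)
    (ρ : H →* (A ≃ₐ[k] A))
    (hm : ∀ h : H, ∀ x ∈ maximalIdeal A, ρ h x ∈ maximalIdeal A)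
    (htriv : ∀ h : H, ∀ x ∈ maximalIdeal A, ρ h x - x ∈ maximalIdeal A ^ 2) :
    (∀ n : ℕ, (∀ h : H, ∀ a : A, ρ h a - a ∈ maximalIdeal A ^ n) →
        ∀ h : H, ∀ a : A, ρ h a - a ∈ maximalIdeal A ^ (n + 1)) ∧
      ((⨅ n : ℕ, maximalIdeal A ^ n) = ⊥ → ∀ h : H, ∀ a : A, ρ h a = a) :=
  trivial_action_on_quotients_general k H A hres hred ρ htriv
end

section
/- For a Noetherian local k-algebra A with maximal ideal m and m^n = 0, the kernel of the natural group homomorphism Aut_k-alg(A) → GL(m/m²) is a unipotent algebraic group. -/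
open IsLocalRing

/-! An automorphism `φ` acting trivially on `m/m²` moves every `x ∈ mⁱ` only by an element of
`mⁱ⁺¹`: the Leibniz-type identity `φ(ab) - ab = (φa - a)·φb + a·(φb - b)` propagates the condition
from `m` to its powers, and the case `i = 0` holds because `A = k + m`. Thus `φ - id` shifts the
`m`-adic filtration, which reaches `0` after `n` steps, so `(φ - id)ⁿ = 0`. -/

theorem Module.End.isNilpotent_of_le_comap_succ {R M : Type*} [Semiring R] [AddCommMonoid M]
    [Module R M] (f : Module.End R M) (F : ℕ → Submodule R M) (h_top : F 0 = ⊤) {n : ℕ}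
    (h_bot : F n = ⊥) (hf : ∀ i, F i ≤ (F (i + 1)).comap f) : IsNilpotent f := by
  have hpow : ∀ j x, (f ^ j) x ∈ F j := by
    intro j
    induction j with
    | zero => simp [h_top]
    | succ j ih => exact fun x => by rw [pow_succ', Module.End.mul_apply]; exact hf j (ih x)
  exact ⟨n, LinearMap.ext fun x => by simpa [h_bot] using hpow n x⟩

theorem AlgHom.sub_mem_of_surjective_algebraMap {k A : Type*} [CommRing k] [CommRing A]
    [Algebra k A] (φ : A →ₐ[k] A) {I : Ideal A}
    (hI : Function.Surjective (algebraMap k (A ⧸ I))) (h : ∀ x ∈ I, φ x - x ∈ I) (x : A) :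
    φ x - x ∈ I := by
  obtain ⟨c, hc⟩ := hI (Ideal.Quotient.mk I x)
  have hx : x - algebraMap k A c ∈ I := by
    rw [← Ideal.Quotient.eq, ← hc, Ideal.Quotient.mk_algebraMap]
  have hφx : φ x - x = φ (x - algebraMap k A c) - (x - algebraMap k A c) := by
    rw [map_sub, AlgHom.commutes]; ring
  exact hφx ▸ h _ hx

theorem RingHom.sub_mem_pow_succ_of_mem_pow {A : Type*} [CommRing A] (φ : A →+* A) {I : Ideal A}
    (h0 : ∀ x, φ x - x ∈ I) (h1 : ∀ x ∈ I, φ x - x ∈ I ^ 2) (i : ℕ) :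
    ∀ x ∈ I ^ i, φ x - x ∈ I ^ (i + 1) := by
  induction i with
  | zero => exact fun x _ => by simpa using h0 x
  | succ i ih =>
    intro x hx
    rw [pow_succ] at hx
    refine Submodule.mul_induction_on hx (fun a ha b hb => ?_) (fun y z hy hz => ?_)
    · have hφb : φ b ∈ I := by
        simpa using I.add_mem hb (Ideal.pow_le_self two_ne_zero (h1 b hb))
      have hleibniz : φ (a * b) - a * b = (φ a - a) * φ b + a * (φ b - b) := by
        rw [map_mul]; ring
      rw [hleibniz]
      refine Ideal.add_mem _ ?_ ?_
      · simpa [← pow_succ] using Ideal.mul_mem_mul (ih a ha) hφb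
      · simpa [← pow_add] using Ideal.mul_mem_mul ha (h1 b hb)
    · simpa [map_add, add_sub_add_comm] using Ideal.add_mem _ hy hz

theorem ker_to_cotangent_unipotent_general
    (k A : Type) [Field k]
    [CommRing A] [Algebra k A] [IsLocalRing A]
    (hres : Function.Bijective (algebraMap k (A ⧸ maximalIdeal A)))
    (n : ℕ) (hn : maximalIdeal A ^ n = ⊥)
    (φ : A ≃ₐ[k] A)
    (hφ : ∀ x ∈ maximalIdeal A, φ x - x ∈ maximalIdeal A ^ 2) :
    IsNilpotent (φ.toLinearMap - LinearMap.id (R := k) (M := A)) := by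
  have hφ0 : ∀ x, φ x - x ∈ maximalIdeal A :=
    φ.toAlgHom.sub_mem_of_surjective_algebraMap hres.2
      fun x hx => Ideal.pow_le_self two_ne_zero (hφ x hx)
  refine Module.End.isNilpotent_of_le_comap_succ _
    (fun i => (maximalIdeal A ^ i).restrictScalars k) (by simp) (n := n) (by simp [hn]) ?_
  intro i x hx
  exact (φ : A →+* A).sub_mem_pow_succ_of_mem_pow hφ0 hφ i x hx

/-- For a finite-dimensional local `k`-algebra `(A, m)` with residue field `k` and
`mⁿ = 0`, the kernel of the natural homomorphism `Aut_{k-alg}(A) → GL(m/m²)` is a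
unipotent algebraic group: every `k`-algebra automorphism `φ` of `A` acting trivially on
`m/m²` is a unipotent operator on `A`, i.e. `φ − id` is nilpotent. -/
theorem ker_to_cotangent_unipotent
    (k A : Type) [Field k] [CharZero k]
    [CommRing A] [Algebra k A] [IsLocalRing A]
    [FiniteDimensional k A]
    (hres : Function.Bijective (algebraMap k (A ⧸ maximalIdeal A)))
    (n : ℕ) (hn : maximalIdeal A ^ n = ⊥)
    (φ : A ≃ₐ[k] A)
    (hφ : ∀ x ∈ maximalIdeal A, φ x - x ∈ maximalIdeal A ^ 2) :
    IsNilpotent (φ.toLinearMap - LinearMap.id (R := k) (M := A)) :=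
  ker_to_cotangent_unipotent_general k A hres n hn φ hφ
end
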